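/- Let p ∈ (0,1), t > 0 and x real with 0 < |x| < t. Then (1/(4√π p² (1−p)²)) ∫_{|x|}^{t} (t − w)^{−1/2} [ ∫₀^∞ z^{1/2} r_{1/2}( (w+x) z / (2p²) ) r_{1/2}( (w−x) z / (2(1−p)²) ) dz ] dw = (√2/π) p (1−p) (t − |x|)^{1/2} / [ ( 2p² t + (1−2p)(t+x) ) · ( 2p² |x| + (1−2p)(x+|x|) )^{1/2} ]. The left-hand side is the formula of Theorem 1 for the density p_t(x) of the wait-first Lévy walk limit X(t) = L_α⁻(S_α^{−1}(t)) specialized to α = 1/2, and the right-hand side is the closed form of Corollary 2. -/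

import Mathlib

open MeasureTheory Set

noncomputable def levyHalf (x : ℝ) : ℝ :=
  if 0 < x then (1 / (2 * Real.sqrt Real.pi)) * x ^ (-(3:ℝ)/2) * Real.exp (-1 / (4 * x)) else 0

/-!
For fixed `w`, the product of the two Lévy densities at `a z` and `b z` is a constant times
`z ^ (-3) * exp (-c / z)` with `c = (a + b) / (4 a b)`, so after `z ↦ 1 / z` the inner integral
is a Gamma integral and equals `(a + b) ^ (-3/2) / √π`; here `a + b` is an affine function
`A w + B` of `w`. The outer integral `∫ (t - w) ^ (-1/2) (A w + B) ^ (-3/2) dw` is elementary,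
since `√(t - w) / √(A w + B)` has derivative `-(A t + B) / 2` times the integrand.
-/

open Real

theorem integral_rpow_neg_mul_exp_neg_div_Ioi {s c : ℝ} (hs : 0 < s) (hc : 0 < c) :
    ∫ z in Ioi (0:ℝ), z ^ (-s - 1) * exp (-c / z) = c ^ (-s) * Gamma s := by
  have subst := integral_comp_rpow_Ioi (fun y => y ^ (s - 1) * exp (-(c * y)))
    (p := -1) (by norm_num)
  rw [integral_rpow_mul_exp_neg_mul_Ioi hs hc, one_div, inv_rpow hc.le, ← rpow_neg hc.le]
    at subst
  rw [← subst]
  refine setIntegral_congr_fun measurableSet_Ioi fun z (hz : 0 < z) => ?_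
  have hpow : z ^ (-s - 1) = z ^ ((-1:ℝ) - 1) * (z ^ (-1:ℝ)) ^ (s - 1) := by
    rw [← rpow_mul hz.le, ← rpow_add hz]; ring_nf
  simp only [smul_eq_mul, hpow, rpow_neg_one, abs_neg, abs_one, one_mul, neg_mul, div_eq_mul_inv]
  ring

theorem rpow_neg_three_halves_div_four {a : ℝ} (ha : 0 ≤ a) :
    (a / 4) ^ (-(3:ℝ)/2) = 8 * a ^ (-(3:ℝ)/2) := by
  have h4 : (4:ℝ) ^ ((3:ℝ)/2) = 8 := by
    rw [show (4:ℝ) = 2 ^ (2:ℝ) by norm_num, ← rpow_mul (by norm_num)]; norm_num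
  rw [div_rpow ha (by norm_num), show -(3:ℝ)/2 = -(3/2) by ring,
    rpow_neg (by norm_num : (0:ℝ) ≤ 4), h4]
  ring

theorem levyHalf_of_pos {x : ℝ} (hx : 0 < x) :
    levyHalf x = (1 / (2 * √π)) * x ^ (-(3:ℝ)/2) * exp (-1 / (4 * x)) :=
  if_pos hx

theorem levyHalf_mul_levyHalf {a b z : ℝ} (ha : 0 < a) (hb : 0 < b) (hz : 0 < z) :
    z ^ ((1:ℝ)/2) * levyHalf (a * z) * levyHalf (b * z)
      = (4 * π)⁻¹ * (a * b) ^ (-(3:ℝ)/2) *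
          (z ^ (-(3:ℝ)/2 - 1) * exp (-((a + b) / (4 * a * b)) / z)) := by
  have hpow : z ^ ((1:ℝ)/2) * (z ^ (-(3:ℝ)/2) * z ^ (-(3:ℝ)/2)) = z ^ (-(3:ℝ)/2 - 1) := by
    rw [← rpow_add hz, ← rpow_add hz]; norm_num
  have hexp : exp (-1 / (4 * (a * z))) * exp (-1 / (4 * (b * z)))
      = exp (-((a + b) / (4 * a * b)) / z) := by
    rw [← exp_add]; congr 1; field_simp; ring
  have hconst : (1 / (2 * √π)) * (1 / (2 * √π)) = (4 * π)⁻¹ := by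
    field_simp; rw [sq_sqrt pi_pos.le]; ring
  rw [levyHalf_of_pos (by positivity), levyHalf_of_pos (by positivity),
    mul_rpow ha.le hz.le, mul_rpow hb.le hz.le, mul_rpow ha.le hb.le, ← hpow, ← hexp,
    ← hconst]
  ring

theorem integral_rpow_mul_levyHalf_mul_levyHalf {a b : ℝ} (ha : 0 < a) (hb : 0 < b) :
    ∫ z in Ioi (0:ℝ), z ^ ((1:ℝ)/2) * levyHalf (a * z) * levyHalf (b * z)
      = (√π)⁻¹ * (a + b) ^ (-(3:ℝ)/2) := by
  have hc : 0 < (a + b) / (4 * a * b) := by positivity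
  have hprod : (a * b) ^ (-(3:ℝ)/2) * ((a + b) / (4 * a * b)) ^ (-(3:ℝ)/2)
      = 8 * (a + b) ^ (-(3:ℝ)/2) := by
    rw [← mul_rpow (by positivity) hc.le, show a * b * ((a + b) / (4 * a * b)) = (a + b) / 4 by
      field_simp, rpow_neg_three_halves_div_four (by positivity)]
  have hGamma : Gamma (3 / 2) = √π / 2 := by
    rw [show (3:ℝ)/2 = 1/2 + 1 by norm_num, Gamma_add_one (by norm_num), Gamma_one_half_eq]
    ring
  have hconst : (4 * π)⁻¹ * (√π / 2) * 8 = (√π)⁻¹ := by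
    field_simp; rw [sq_sqrt pi_pos.le]; ring
  rw [setIntegral_congr_fun measurableSet_Ioi fun z (hz : 0 < z) =>
      levyHalf_mul_levyHalf ha hb hz,
    integral_const_mul, show -(3:ℝ)/2 - 1 = -(3/2) - 1 by ring,
    integral_rpow_neg_mul_exp_neg_div_Ioi (by norm_num) hc, hGamma, ← neg_div, ← hconst,
    mul_assoc _ 8, ← hprod]
  ring

theorem mul_add_pos_of_mem_Icc {A B s t w : ℝ} (hs : 0 < A * s + B) (ht : 0 < A * t + B)
    (hw : w ∈ Icc s t) : 0 < A * w + B := by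
  rcases le_total 0 A with hA | hA <;> nlinarith [hw.1, hw.2]

theorem hasDerivAt_sqrt_sub_div_sqrt_mul_add {A B t w : ℝ} (hw : w < t) (hAw : 0 < A * w + B) :
    HasDerivAt (fun w => √(t - w) / √(A * w + B))
      (-(A * t + B) / 2 * ((t - w) ^ (-(1:ℝ)/2) * (A * w + B) ^ (-(3:ℝ)/2))) w := by
  have htw : 0 < t - w := sub_pos.2 hw
  have hnum : HasDerivAt (fun w => √(t - w)) (1 / (2 * √(t - w)) * (-1)) w :=
    (hasDerivAt_sqrt htw.ne').comp w ((hasDerivAt_id w).const_sub t)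
  have hden : HasDerivAt (fun w => √(A * w + B)) (1 / (2 * √(A * w + B)) * A) w :=
    (hasDerivAt_sqrt hAw.ne').comp w (by simpa using ((hasDerivAt_id w).const_mul A).add_const B)
  refine (hnum.div hden (sqrt_pos.2 hAw).ne').congr_deriv ?_
  have hu : (t - w) ^ (-(1:ℝ)/2) = (√(t - w))⁻¹ := by
    rw [show -(1:ℝ)/2 = -(1/2) by ring, rpow_neg htw.le, sqrt_eq_rpow]
  have hv : (A * w + B) ^ (-(3:ℝ)/2) = (√(A * w + B))⁻¹ * (√(A * w + B) ^ 2)⁻¹ := by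
    rw [show -(3:ℝ)/2 = -(1/2) + -1 by ring, rpow_add hAw, rpow_neg hAw.le, rpow_neg_one,
      sq_sqrt hAw.le, sqrt_eq_rpow]
  have hsplit : A * t + B = A * √(t - w) ^ 2 + √(A * w + B) ^ 2 := by
    rw [sq_sqrt htw.le, sq_sqrt hAw.le]; ring
  rw [hu, hv, hsplit]
  have := sqrt_pos.2 htw
  have := sqrt_pos.2 hAw
  field_simp
  ring

theorem integral_rpow_sub_mul_rpow_mul_add {A B s t : ℝ} (hs : 0 < A * s + B)
    (ht : 0 < A * t + B) (hst : s ≤ t) :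
    ∫ w in s..t, (t - w) ^ (-(1:ℝ)/2) * (A * w + B) ^ (-(3:ℝ)/2)
      = 2 * √(t - s) / ((A * t + B) * √(A * s + B)) := by
  have hpos : ∀ w ∈ Icc s t, 0 < A * w + B := fun w hw => mul_add_pos_of_mem_Icc hs ht hw
  set F : ℝ → ℝ := fun w => -2 / (A * t + B) * (√(t - w) / √(A * w + B)) with hF
  have hcont : ContinuousOn F (Icc s t) := by
    refine continuousOn_const.mul (ContinuousOn.div (by fun_prop) (by fun_prop) fun w hw => ?_)
    exact (sqrt_pos.2 (hpos w hw)).ne'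
  have hderiv : ∀ w ∈ Ioo s t,
      HasDerivAt F ((t - w) ^ (-(1:ℝ)/2) * (A * w + B) ^ (-(3:ℝ)/2)) w := fun w hw => by
    refine ((hasDerivAt_sqrt_sub_div_sqrt_mul_add hw.2
      (hpos w (Ioo_subset_Icc_self hw))).const_mul _).congr_deriv ?_
    field_simp
  have hint : IntervalIntegrable (fun w => (t - w) ^ (-(1:ℝ)/2) * (A * w + B) ^ (-(3:ℝ)/2))
      volume s t := by
    have hsing : IntervalIntegrable (fun w => (t - w) ^ (-(1:ℝ)/2)) volume s t := by
      simpa using ((intervalIntegral.intervalIntegrable_rpow' (r := -(1:ℝ)/2) (by norm_num)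
        (a := 0) (b := t - s)).comp_sub_left t).symm
    refine hsing.mul_continuousOn (ContinuousOn.rpow_const (by fun_prop) fun w hw => ?_)
    rw [uIcc_of_le hst] at hw
    exact Or.inl (hpos w hw).ne'
  rw [intervalIntegral.integral_eq_sub_of_hasDeriv_right_of_le hst hcont
    (fun w hw => (hderiv w hw).hasDerivWithinAt) hint]
  have := sqrt_pos.2 hs
  simp only [hF, sub_self, sqrt_zero, zero_div, mul_zero]
  field_simp
  ring

theorem integral_rpow_mul_levyHalf_div_mul_levyHalf_div {p w x : ℝ} (hp0 : p ≠ 0)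
    (hp1 : p ≠ 1) (hxw : |x| < w) :
    ∫ z in Ioi (0:ℝ), z ^ ((1:ℝ)/2) * levyHalf ((w + x) * z / (2 * p^2)) *
        levyHalf ((w - x) * z / (2 * (1 - p)^2))
      = (√π)⁻¹ * (2 * p^2 * (1 - p)^2) ^ ((3:ℝ)/2) *
          ((2 * p^2 + (1 - 2*p)) * w + (1 - 2*p) * x) ^ (-(3:ℝ)/2) := by
  have hq : 1 - p ≠ 0 := sub_ne_zero.2 hp1.symm
  have hwx : 0 < w + x := by linarith [neg_abs_le x]
  have hwx' : 0 < w - x := by linarith [le_abs_self x]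
  have hlin : 0 < (2 * p^2 + (1 - 2*p)) * w + (1 - 2*p) * x := by
    have : (2 * p^2 + (1 - 2*p)) * w + (1 - 2*p) * x = p^2 * (w - x) + (1 - p)^2 * (w + x) := by
      ring
    rw [this]; positivity
  have hsum : (w + x) / (2 * p^2) + (w - x) / (2 * (1 - p)^2)
      = ((2 * p^2 + (1 - 2*p)) * w + (1 - 2*p) * x) / (2 * p^2 * (1 - p)^2) := by
    field_simp; ring
  simp_rw [show ∀ z, (w + x) * z / (2 * p^2) = (w + x) / (2 * p^2) * z from fun z => by ring,
    show ∀ z, (w - x) * z / (2 * (1 - p)^2) = (w - x) / (2 * (1 - p)^2) * z from fun z => by ring]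
  rw [integral_rpow_mul_levyHalf_mul_levyHalf (by positivity) (by positivity), hsum,
    div_rpow hlin.le (by positivity), neg_div,
    rpow_neg (by positivity : (0:ℝ) ≤ 2 * p^2 * (1 - p)^2)]
  field_simp

theorem wait_first_density_half_general (p t x : ℝ) (hp : p ∈ Ioo (0:ℝ) 1)
    (hx₀ : 0 < |x|) (hxt : |x| < t) :
    (1 / (4 * Real.sqrt Real.pi * p^2 * (1 - p)^2)) *
      ∫ w in |x|..t, (t - w) ^ (-(1:ℝ)/2) *
        ∫ z in Ioi (0:ℝ),
          z ^ ((1:ℝ)/2) * levyHalf ((w + x) * z / (2 * p^2)) *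
            levyHalf ((w - x) * z / (2 * (1 - p)^2))
      = Real.sqrt 2 / Real.pi * (p * (1 - p)) * (t - |x|) ^ ((1:ℝ)/2) /
          ((2 * p^2 * t + (1 - 2*p) * (t + x)) *
            (2 * p^2 * |x| + (1 - 2*p) * (x + |x|)) ^ ((1:ℝ)/2)) := by
  obtain ⟨hp0, hp1⟩ := hp
  have hq : 0 < 1 - p := sub_pos.2 hp1
  -- this is `2 (1 - p)^2 x` for `x ≥ 0` and `2 p^2 |x|` for `x < 0`
  have hAx : 0 < (2 * p^2 + (1 - 2*p)) * |x| + (1 - 2*p) * x := by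
    rcases abs_cases x with ⟨hx, -⟩ | ⟨hx, -⟩ <;> rw [hx] at hx₀ ⊢
    · nlinarith [mul_pos (mul_pos hq hq) hx₀]
    · nlinarith [mul_pos (mul_pos hp0 hp0) hx₀]
  have hA : 0 < 2 * p^2 + (1 - 2*p) := by nlinarith
  have hAt : 0 < (2 * p^2 + (1 - 2*p)) * t + (1 - 2*p) * x := by
    nlinarith [mul_pos hA (sub_pos.2 hxt)]
  have hC : (2 * p^2 * (1 - p)^2) ^ ((3:ℝ)/2) = 2 * √2 * (p * (1 - p))^3 := by
    rw [show (3:ℝ)/2 = 1 + 1/2 by norm_num, rpow_add (by positivity), rpow_one, ← sqrt_eq_rpow,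
      show 2 * p^2 * (1 - p)^2 = 2 * (p * (1 - p))^2 by ring, sqrt_mul zero_le_two,
      sqrt_sq (by positivity)]
    ring
  rw [intervalIntegral.integral_congr_Ioo_of_le hxt.le fun w hw => by
      rw [integral_rpow_mul_levyHalf_div_mul_levyHalf_div hp0.ne' hp1.ne hw.1, mul_left_comm],
    intervalIntegral.integral_const_mul, integral_rpow_sub_mul_rpow_mul_add hAx hAt hxt.le, hC,
    ← sqrt_eq_rpow, ← sqrt_eq_rpow,
    show 2 * p^2 * t + (1 - 2*p) * (t + x) = (2 * p^2 + (1 - 2*p)) * t + (1 - 2*p) * x by ring,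
    show 2 * p^2 * |x| + (1 - 2*p) * (x + |x|) = (2 * p^2 + (1 - 2*p)) * |x| + (1 - 2*p) * x by
      ring]
  conv_rhs => rw [← mul_self_sqrt pi_pos.le]
  have := sqrt_pos.2 hAx
  have := sqrt_pos.2 pi_pos
  field_simp
  ring

/-- The formula of Theorem 1 for the density `p_t(x)` of the wait-first Lévy walk limit,
specialized to `α = 1/2`, equals the closed form of Corollary 2: for `p ∈ (0,1)`, `t > 0`
and `0 < |x| < t`,
`(1/(4√π p²(1−p)²)) ∫_{|x|}^{t} (t−w)^{−1/2}
    [∫₀^∞ z^{1/2} r_{1/2}((w+x)z/(2p²)) r_{1/2}((w−x)z/(2(1−p)²)) dz] dw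
 = (√2/π) p(1−p) (t−|x|)^{1/2} / ((2p²t + (1−2p)(t+x)) (2p²|x| + (1−2p)(x+|x|))^{1/2})`. -/
theorem wait_first_density_half (p t x : ℝ) (hp : p ∈ Ioo (0:ℝ) 1) (ht : 0 < t)
    (hx₀ : 0 < |x|) (hxt : |x| < t) :
    (1 / (4 * Real.sqrt Real.pi * p^2 * (1 - p)^2)) *
      ∫ w in |x|..t, (t - w) ^ (-(1:ℝ)/2) *
        ∫ z in Ioi (0:ℝ),
          z ^ ((1:ℝ)/2) * levyHalf ((w + x) * z / (2 * p^2)) *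
            levyHalf ((w - x) * z / (2 * (1 - p)^2))
      = Real.sqrt 2 / Real.pi * (p * (1 - p)) * (t - |x|) ^ ((1:ℝ)/2) /
          ((2 * p^2 * t + (1 - 2*p) * (t + x)) *
            (2 * p^2 * |x| + (1 - 2*p) * (x + |x|)) ^ ((1:ℝ)/2)) :=
  wait_first_density_half_general p t x hp hx₀ hxt
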